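/- Let 𝒜 be a partially ordered set, V a vector space over a field K, and W : 𝒜 → Submodule K V a monotone map. Let 𝒰(𝒜) be the set of lower sets of 𝒜, ordered by inclusion, and define i_*W : 𝒰(𝒜) → Submodule K V by i_*W(B) = ⨆_{b ∈ B} W b. Then W is decomposable if and only if i_*W is decomposable. -/

import Mathlib

/-!
A decomposition `s` of `W` is pushed to the lower sets by putting `s a` at the principal lower set
`Iic a` and `⊥` elsewhere; since `B` is a lower set, `⨆ b ∈ B, W b = ⨆ b ∈ B, s b`.
Conversely, in a decomposition `t` of `i_*W` the summand at a non-principal lower set `C` lies in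
`⨆ b ∈ C, W b = ⨆ b ∈ C, i_*W (Iic b)`, which is spanned by summands at lower sets other than `C`;
by independence it vanishes, so restricting `t` along `Iic` decomposes `W`.
-/

open Function Set

section VanishingOffRange

variable {α ι β : Type*} [CompleteLattice α] {f : ι → β} {t : β → α}

theorem iSup₂_eq_iSup₂_comp_of_eq_bot (ht : ∀ y ∉ range f, t y = ⊥) (r : β → Prop) :
    ⨆ y, ⨆ _ : r y, t y = ⨆ x, ⨆ _ : r (f x), t (f x) := by
  refine le_antisymm (iSup₂_le fun y hy => ?_)
    (iSup₂_le fun x hx => le_iSup₂_of_le (f x) hx le_rfl)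
  by_cases hyf : y ∈ range f
  · obtain ⟨x, rfl⟩ := hyf
    exact le_iSup₂_of_le x hy le_rfl
  · simp [ht y hyf]

theorem iSupIndep.of_comp_of_eq_bot (h : iSupIndep (t ∘ f)) (ht : ∀ y ∉ range f, t y = ⊥) :
    iSupIndep t := by
  intro y
  by_cases hyf : y ∈ range f
  · obtain ⟨x, rfl⟩ := hyf
    refine (h x).mono_right ?_
    rw [iSup₂_eq_iSup₂_comp_of_eq_bot ht (· ≠ f x)]
    exact iSup₂_mono' fun x' hx' => ⟨x', fun hxx' => hx' (congrArg f hxx'), le_rfl⟩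
  · simp [ht y hyf]

end VanishingOffRange

section Decomposition

variable {α P : Type*} [CompleteLattice α] [Preorder P] {F s : P → α}

def IsDecomposition (F s : P → α) : Prop :=
  iSupIndep s ∧ ∀ a, F a = ⨆ b, ⨆ _ : b ≤ a, s b

theorem IsDecomposition.le_apply (h : IsDecomposition F s) (a : P) : s a ≤ F a :=
  (h.2 a).symm ▸ le_iSup₂_of_le a le_rfl le_rfl

theorem IsDecomposition.eq_bot_of_le_iSup_lt (h : IsDecomposition F s) {a : P}
    (ha : F a ≤ ⨆ b, ⨆ _ : b < a, F b) : s a = ⊥ := by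
  refine (h.1 a).eq_bot_of_le <| (h.le_apply a).trans <| ha.trans <| iSup₂_le fun b hba => ?_
  rw [h.2 b]
  exact iSup₂_mono' fun c hcb => ⟨c, (hcb.trans_lt hba).ne, le_rfl⟩

end Decomposition

namespace LowerSet

variable {α P : Type*} [CompleteLattice α] [PartialOrder P] {W s : P → α} {t : LowerSet P → α}

/-- The paper's `i_*W`, for the embedding `i = LowerSet.Iic`. -/
def pushforward (W : P → α) (B : LowerSet P) : α :=
  ⨆ b ∈ B, W b

theorem pushforward_Iic (hW : Monotone W) (a : P) : pushforward W (Iic a) = W a :=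
  le_antisymm (iSup₂_le fun _ hb => hW hb) (le_iSup₂_of_le a le_rfl le_rfl)

theorem biSup_biSup_le (B : LowerSet P) (s : P → α) :
    ⨆ a ∈ B, ⨆ b, ⨆ _ : b ≤ a, s b = ⨆ b ∈ B, s b :=
  le_antisymm
    (iSup₂_le fun _ ha => iSup₂_le fun b hba => le_iSup₂_of_le b (B.lower hba ha) le_rfl)
    (iSup₂_mono' fun b hb => ⟨b, hb, le_iSup₂_of_le b le_rfl le_rfl⟩)

theorem _root_.IsDecomposition.pushforward (h : IsDecomposition W s) :
    IsDecomposition (pushforward W) (extend Iic s ⊥) := by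
  have hbot : ∀ C ∉ range Iic, extend Iic s ⊥ C = ⊥ := fun C hC => extend_apply' _ _ _ hC
  refine ⟨((extend_comp Iic_injective s ⊥).symm ▸ h.1).of_comp_of_eq_bot hbot, fun B => ?_⟩
  rw [iSup₂_eq_iSup₂_comp_of_eq_bot hbot]
  simp only [LowerSet.pushforward, h.2, biSup_biSup_le, Iic_le,
    Iic_injective.extend_apply]

theorem _root_.IsDecomposition.eq_bot_of_notMem_range_Iic (hW : Monotone W)
    (h : IsDecomposition (pushforward W) t) {C : LowerSet P} (hC : C ∉ range Iic) : t C = ⊥ :=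
  h.eq_bot_of_le_iSup_lt <| iSup₂_le fun b hb =>
    le_iSup₂_of_le (Iic b) ((Iic_le.2 hb).lt_of_ne fun hbC => hC ⟨b, hbC⟩)
      (pushforward_Iic hW b).ge

theorem _root_.IsDecomposition.of_pushforward (hW : Monotone W)
    (h : IsDecomposition (pushforward W) t) : IsDecomposition W (t ∘ Iic) := by
  refine ⟨h.1.comp Iic_injective, fun a => ?_⟩
  rw [← pushforward_Iic hW a, h.2,
    iSup₂_eq_iSup₂_comp_of_eq_bot fun _ hC => h.eq_bot_of_notMem_range_Iic hW hC]
  simp only [Iic_le, mem_Iic_iff, comp_apply]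

end LowerSet

/-- For a monotone `W : 𝒜 → Submodule K V` and the poset `𝒰(𝒜)` of
lower sets of `𝒜` ordered by inclusion, with `i_*W (B) = ⨆_{b ∈ B} W b`,
`W` is decomposable iff `i_*W` is decomposable. -/
theorem stmt_15 {K V A : Type*} [Field K] [AddCommGroup V] [Module K V]
    [PartialOrder A]
    (W : A → Submodule K V) (hW : Monotone W) :
    (∃ s : A → Submodule K V,
        (∀ a : A, s a ⊓ (⨆ b, ⨆ _ : b ≠ a, s b) = ⊥) ∧
        (∀ a : A, W a = ⨆ b, ⨆ _ : b ≤ a, s b)) ↔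
      (∃ t : LowerSet A → Submodule K V,
        (∀ B : LowerSet A, t B ⊓ (⨆ C, ⨆ _ : C ≠ B, t C) = ⊥) ∧
        (∀ B : LowerSet A, (⨆ b ∈ (B : Set A), W b) = ⨆ C, ⨆ _ : C ≤ B, t C)) := by
  simp only [← disjoint_iff, ← iSupIndep_def]
  exact ⟨fun ⟨_, hs⟩ => ⟨_, IsDecomposition.pushforward hs⟩,
    fun ⟨_, ht⟩ => ⟨_, IsDecomposition.of_pushforward hW ht⟩⟩
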